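/- For every universal-deadline instance (d,σ) in which σ is non-decreasing (with nonnegative rational values), Φ_{26/5}(σ) ≥ 0; that is, (26/5)·Σ_{t=0}^{d−1} ϱ̂_σ(t) ≥ Σ_{t=0}^{d−1} σ(t). -/

import Mathlib

/-- The maximum online density at time `t` of the universal-deadline instance `(d, σ)`:
`ϱ̂_σ(t) = max_{0≤ℓ≤t} (Σ_{i=ℓ}^{t} σ(i)) / (d − ℓ)`. -/
def maxOnlineDensity (d : ℕ) (σ : ℕ → ℚ) (t : ℕ) : ℚ :=
  (Finset.range (t + 1)).sup' Finset.nonempty_range_add_one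
    (fun ℓ => (∑ i ∈ Finset.Icc ℓ t, σ i) / ((d : ℚ) - (ℓ : ℚ)))

lemma density_ge (d : ℕ) (σ : ℕ → ℚ) (t ℓ : ℕ) (hℓ : ℓ ≤ t) :
    (∑ i ∈ Finset.Icc ℓ t, σ i) / ((d : ℚ) - (ℓ : ℚ)) ≤ maxOnlineDensity d σ t := by
  unfold maxOnlineDensity
  exact Finset.le_sup' (fun ℓ => (∑ i ∈ Finset.Icc ℓ t, σ i) / ((d : ℚ) - (ℓ : ℚ)))
    (Finset.mem_range.mpr (Nat.lt_succ_of_le hℓ))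

lemma density_nonneg (d : ℕ) (σ : ℕ → ℚ) (hσ : ∀ i, 0 ≤ σ i) (t : ℕ) (ht : t < d) :
    0 ≤ maxOnlineDensity d σ t := by
  refine le_trans ?_ (density_ge d σ t t le_rfl)
  have h1 : (0:ℚ) < (d : ℚ) - (t : ℚ) := by
    have : (t:ℚ) < d := by exact_mod_cast ht
    linarith
  have h2 : 0 ≤ ∑ i ∈ Finset.Icc t t, σ i := Finset.sum_nonneg fun i _ => hσ i
  positivity

lemma key_bound (d : ℕ) (hd : 1 ≤ d) (σ : ℕ → ℚ) (hσ : ∀ i, 0 ≤ σ i)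
    (hmono : ∀ i j : ℕ, i ≤ j → j < d → σ i ≤ σ j) (i : ℕ) (hi : i < d) :
    σ i ≤ 2 * maxOnlineDensity d σ ((i + d) / 2) := by
  set t := (i + d) / 2 with ht
  have hit : i ≤ t := by omega
  have htd : t < d := by omega
  have hdi : (0:ℚ) < (d : ℚ) - (i : ℚ) := by
    have : (i:ℚ) < d := by exact_mod_cast hi
    linarith
  -- sum over Icc i t is at least (t - i + 1) * σ i
  have hsum : ((t - i + 1 : ℕ) : ℚ) * σ i ≤ ∑ j ∈ Finset.Icc i t, σ j := by
    have := Finset.card_nsmul_le_sum (Finset.Icc i t) σ (σ i)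
      (fun j hj => by
        rw [Finset.mem_Icc] at hj
        exact hmono i j hj.1 (lt_of_le_of_lt hj.2 htd))
    rwa [Nat.card_Icc, nsmul_eq_mul, show t + 1 - i = t - i + 1 by omega] at this
  have hhalf : ((d : ℚ) - (i : ℚ)) / 2 ≤ ((t - i + 1 : ℕ) : ℚ) := by
    have h2 : d - i ≤ 2 * (t - i + 1) := by omega
    have h2' : ((d - i : ℕ) : ℚ) ≤ 2 * ((t - i + 1 : ℕ) : ℚ) := by exact_mod_cast h2
    have hcast : ((d - i : ℕ) : ℚ) = (d : ℚ) - (i : ℚ) := by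
      have : i ≤ d := le_of_lt hi
      push_cast [this]; ring
    linarith [hcast ▸ h2']
  have hmain : σ i / 2 ≤ (∑ j ∈ Finset.Icc i t, σ j) / ((d : ℚ) - (i : ℚ)) := by
    rw [div_le_div_iff₀ (by norm_num) hdi]
    have := mul_le_mul_of_nonneg_left hhalf (hσ i)
    nlinarith [hσ i]
  have := le_trans hmain (density_ge d σ t i hit)
  linarith

/-- **feasibility of packing-via-density(5.2).**  For every
universal-deadline instance `(d, σ)` with `σ` non-decreasing and nonnegative,
`Φ_{26/5}(σ) ≥ 0`, i.e. `(26/5)·Σ_{t=0}^{d−1} ϱ̂_σ(t) ≥ Σ_{t=0}^{d−1} σ(t)`. -/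
theorem potential_five_point_two_nonneg (d : ℕ) (hd : 1 ≤ d) (σ : ℕ → ℚ)
    (hσ : ∀ i, 0 ≤ σ i) (hmono : ∀ i j : ℕ, i ≤ j → j < d → σ i ≤ σ j) :
    ∑ t ∈ Finset.range d, σ t ≤ (26 / 5) * ∑ t ∈ Finset.range d, maxOnlineDensity d σ t := by
  set f : ℕ → ℚ := maxOnlineDensity d σ with hf
  set g : ℕ → ℕ := fun i => (i + d) / 2 with hg
  have hfnn : ∀ t ∈ Finset.range d, 0 ≤ f t := fun t ht =>
    density_nonneg d σ hσ t (Finset.mem_range.mp ht)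
  -- step 1: ∑ σ ≤ 2 * ∑ f (g i)
  have step1 : ∑ i ∈ Finset.range d, σ i ≤ 2 * ∑ i ∈ Finset.range d, f (g i) := by
    rw [Finset.mul_sum]
    exact Finset.sum_le_sum fun i hi =>
      key_bound d hd σ hσ hmono i (Finset.mem_range.mp hi)
  -- step 2: ∑_{i ∈ range d} f (g i) ≤ 2 * ∑_{t ∈ range d} f t
  have step2 : ∑ i ∈ Finset.range d, f (g i) ≤ 2 * ∑ t ∈ Finset.range d, f t := by
    rw [Finset.sum_comp]
    have himg : (Finset.range d).image g ⊆ Finset.range d := by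
      intro b hb
      obtain ⟨i, hi, rfl⟩ := Finset.mem_image.mp hb
      rw [Finset.mem_range] at hi ⊢
      simp only [hg]
      omega
    calc ∑ b ∈ (Finset.range d).image g,
          ((Finset.range d).filter (fun i => g i = b)).card • f b
        ≤ ∑ b ∈ (Finset.range d).image g, 2 * f b := by
          refine Finset.sum_le_sum fun b hb => ?_
          have hcard : ((Finset.range d).filter (fun i => g i = b)).card ≤ 2 := by
            have hsub : ((Finset.range d).filter (fun i => g i = b)) ⊆
                (({2 * b, 2 * b + 1} : Finset ℕ).filter (fun x => d ≤ x)).image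
                  (fun x => x - d) := by
              intro i hi
              rw [Finset.mem_filter, Finset.mem_range] at hi
              simp only [Finset.mem_image, Finset.mem_filter, Finset.mem_insert,
                Finset.mem_singleton]
              have : i + d = 2 * b ∨ i + d = 2 * b + 1 := by
                have h2 := hi.2
                simp only [hg] at h2
                omega
              rcases this with h | h
              · exact ⟨2 * b, ⟨Or.inl rfl, by omega⟩, by omega⟩
              · exact ⟨2 * b + 1, ⟨Or.inr rfl, by omega⟩, by omega⟩
            calc ((Finset.range d).filter (fun i => g i = b)).card
                ≤ _ := Finset.card_le_card hsub
              _ ≤ (({2 * b, 2 * b + 1} : Finset ℕ).filter (fun x => d ≤ x)).card :=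
                  Finset.card_image_le
              _ ≤ ({2 * b, 2 * b + 1} : Finset ℕ).card := Finset.card_filter_le _ _
              _ ≤ 2 := by
                  refine le_trans (Finset.card_insert_le _ _) ?_
                  simp
          have hfb : 0 ≤ f b := hfnn b (himg hb)
          rw [nsmul_eq_mul]
          have : (((Finset.range d).filter (fun i => g i = b)).card : ℚ) ≤ 2 := by
            exact_mod_cast hcard
          nlinarith
      _ = 2 * ∑ b ∈ (Finset.range d).image g, f b := by rw [Finset.mul_sum]
      _ ≤ 2 * ∑ t ∈ Finset.range d, f t := by
          have := Finset.sum_le_sum_of_subset_of_nonneg himg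
            (fun t ht _ => hfnn t ht)
          linarith
  have hSnn : 0 ≤ ∑ t ∈ Finset.range d, f t := Finset.sum_nonneg hfnn
  calc ∑ t ∈ Finset.range d, σ t ≤ 2 * ∑ i ∈ Finset.range d, f (g i) := step1
    _ ≤ 4 * ∑ t ∈ Finset.range d, f t := by linarith
    _ ≤ (26 / 5) * ∑ t ∈ Finset.range d, f t := by linarith
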